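/- Let T be a rooted spanning tree of weighted graph G, and suppose C is a minimum-value cut among all cuts crossing exactly two edges of T, with C = u↓ ∪ v↓ for incomparable vertices u, v. Then there exists an edge of G with one endpoint in u↓ and one endpoint in v↓; i.e., the total weight of edges between u↓ and v↓ is strictly positive. -/

import Mathlib

open scoped Classical

/-- Descendants of `v` (including `v` itself) in the rooted tree given by `parent`. -/
def desc {V : Type*} (parent : V → V) (v : V) : Set V :=
  {x | Relation.ReflTransGen (fun a b => parent a = b) x v}

/-- Ancestors of `v` (including `v` itself) in the rooted tree given by `parent`. -/
def anc {V : Type*} (parent : V → V) (v : V) : Set V :=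
  {x | Relation.ReflTransGen (fun a b => parent a = b) v x}

/-- The (undirected) edges of the rooted tree determined by `parent`. -/
def treeAdj {V : Type*} (parent : V → V) : SimpleGraph V :=
  SimpleGraph.fromRel (fun a b => parent a = b)

/-- Total weight of edges of `G` with one endpoint in `A` and the other in `B`. -/
noncomputable def betweenW {V : Type*} [Fintype V] (G : SimpleGraph V)
    (w : V → V → ℝ) (A B : Set V) : ℝ :=
  ∑ u : V, ∑ v : V, if G.Adj u v ∧ u ∈ A ∧ v ∈ B then w u v else 0

/-- The value of the cut `C` in the weighted graph `(G, w)`. -/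
noncomputable def cutValR {V : Type*} [Fintype V] (G : SimpleGraph V)
    (w : V → V → ℝ) (C : Set V) : ℝ :=
  betweenW G w C Cᶜ

/-! Descendant sets of incomparable vertices are disjoint, since the ancestors of a vertex form a
chain. For disjoint `A` and `B`, the cut of `A ∪ B` is obtained from the cut of `A` by trading
the edges between `A` and `B` for the edges from `B` to the outside of `A ∪ B`; as the latter
weigh at least `0`, a strict decrease forces the former to weigh more than `0`. -/

theorem disjoint_desc_of_notMem_anc {V : Type*} {parent : V → V} {u v : V}
    (huv : u ∉ anc parent v) (hvu : v ∉ anc parent u) :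
    Disjoint (desc parent u) (desc parent v) :=
  Set.disjoint_left.mpr fun _ hxu hxv =>
    (Relation.ReflTransGen.total_of_right_unique (fun _ _ _ hb hc => hb.symm.trans hc)
      hxu hxv).elim hvu huv

section betweenW

variable {V : Type*} [Fintype V] (G : SimpleGraph V) (w : V → V → ℝ)

theorem betweenW_nonneg (hw : ∀ a b, G.Adj a b → 0 ≤ w a b) (A B : Set V) :
    0 ≤ betweenW G w A B :=
  Finset.sum_nonneg fun a _ => Finset.sum_nonneg fun b _ => by
    split_ifs with h
    exacts [hw a b h.1, le_rfl]

theorem exists_adj_of_betweenW_pos {A B : Set V} (h : 0 < betweenW G w A B) :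
    ∃ a ∈ A, ∃ b ∈ B, G.Adj a b := by
  by_contra! hno
  refine h.ne' (Finset.sum_eq_zero fun a _ => Finset.sum_eq_zero fun b _ => if_neg ?_)
  rintro ⟨hab, ha, hb⟩
  exact hno a ha b hb hab

theorem betweenW_union_left {A B : Set V} (h : Disjoint A B) (S : Set V) :
    betweenW G w (A ∪ B) S = betweenW G w A S + betweenW G w B S := by
  simp only [betweenW, ← Finset.sum_add_distrib]
  refine Finset.sum_congr rfl fun a _ => Finset.sum_congr rfl fun b _ => ?_
  by_cases ha : a ∈ A
  · simp [ha, Set.disjoint_left.mp h ha]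
  · simp [ha]

theorem betweenW_union_right {A B : Set V} (h : Disjoint A B) (S : Set V) :
    betweenW G w S (A ∪ B) = betweenW G w S A + betweenW G w S B := by
  simp only [betweenW, ← Finset.sum_add_distrib]
  refine Finset.sum_congr rfl fun a _ => Finset.sum_congr rfl fun b _ => ?_
  by_cases hb : b ∈ A
  · simp [hb, Set.disjoint_left.mp h hb]
  · simp [hb]

theorem cutValR_union_of_disjoint {A B : Set V} (h : Disjoint A B) :
    cutValR G w (A ∪ B) = betweenW G w A (A ∪ B)ᶜ + betweenW G w B (A ∪ B)ᶜ :=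
  betweenW_union_left G w h _

theorem cutValR_eq_add_betweenW_of_disjoint {A B : Set V} (h : Disjoint A B) :
    cutValR G w A = betweenW G w A (A ∪ B)ᶜ + betweenW G w A B := by
  have hcompl : Aᶜ = (A ∪ B)ᶜ ∪ B := by
    ext x
    have := fun hx : x ∈ A => Set.disjoint_left.mp h hx
    simp only [Set.mem_compl_iff, Set.mem_union]
    tauto
  rw [cutValR, hcompl, betweenW_union_right G w (Set.disjoint_compl_left_iff_subset.mpr
    Set.subset_union_right)]

theorem betweenW_pos_of_cutValR_union_lt (hw : ∀ a b, G.Adj a b → 0 ≤ w a b) {A B : Set V}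
    (h : Disjoint A B) (hlt : cutValR G w (A ∪ B) < cutValR G w A) :
    0 < betweenW G w A B := by
  rw [cutValR_union_of_disjoint G w h, cutValR_eq_add_betweenW_of_disjoint G w h] at hlt
  linarith [betweenW_nonneg G w hw B (A ∪ B)ᶜ]

end betweenW

theorem min_two_edge_cut_has_crossing_edge_general {V : Type*} [Fintype V]
    (G : SimpleGraph V)
    (w : V → V → ℝ)
    (hpos : ∀ a b, G.Adj a b → 0 < w a b)
    (parent : V → V)
    (u v : V)
    (huv : u ∉ anc parent v) (hvu : v ∉ anc parent u)
    (hminu : cutValR G w (desc parent u ∪ desc parent v) < cutValR G w (desc parent u)) :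
    (∃ a ∈ desc parent u, ∃ b ∈ desc parent v, G.Adj a b)
      ∧ 0 < betweenW G w (desc parent u) (desc parent v) := by
  have hcross : 0 < betweenW G w (desc parent u) (desc parent v) :=
    betweenW_pos_of_cutValR_union_lt G w (fun a b hab => (hpos a b hab).le)
      (disjoint_desc_of_notMem_anc huv hvu) hminu
  exact ⟨exists_adj_of_betweenW_pos G w hcross, hcross⟩

/-- If `C = u↓ ∪ v↓` (with `u, v` incomparable non-root vertices of a rooted spanning
tree of the connected positively-weighted graph `G`) has strictly smaller cut value
than both `u↓` and `v↓`, then some edge of `G` joins `u↓` and `v↓`; in particular the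
total weight of edges between `u↓` and `v↓` is strictly positive. -/
theorem min_two_edge_cut_has_crossing_edge {V : Type*} [Fintype V]
    (G : SimpleGraph V) (hG : G.Connected)
    (w : V → V → ℝ) (hsymm : ∀ a b, w a b = w b a)
    (hpos : ∀ a b, G.Adj a b → 0 < w a b)
    (parent : V → V) (r : V) (hroot : parent r = r)
    (hreach : ∀ x, Relation.ReflTransGen (fun a b => parent a = b) x r)
    (hspan : treeAdj parent ≤ G)
    (u v : V) (hu : u ≠ r) (hv : v ≠ r)
    (huv : u ∉ anc parent v) (hvu : v ∉ anc parent u)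
    (hminu : cutValR G w (desc parent u ∪ desc parent v) < cutValR G w (desc parent u))
    (hminv : cutValR G w (desc parent u ∪ desc parent v) < cutValR G w (desc parent v)) :
    (∃ a ∈ desc parent u, ∃ b ∈ desc parent v, G.Adj a b)
      ∧ 0 < betweenW G w (desc parent u) (desc parent v) :=
  min_two_edge_cut_has_crossing_edge_general G w hpos parent u v huv hvu hminu
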